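/- Let f: [0,1] → ℝ be continuous and let (pₙ, qₙ): [0,1] → ℕ × ℕ* be a uniform rational approximation, i.e. pₙ(x)/qₙ(x) ∈ [0,1] for all x, inf_{x∈[0,1]} qₙ(x) → ∞, and sup_{x∈[0,1]} |pₙ(x)/qₙ(x) − x| → 0 as n → ∞. Then sup_{x∈[0,1]} |∫₀¹ ρ_{pₙ(x), qₙ(x)−pₙ(x)}(s) f(s) ds − f(x)| → 0 as n → ∞. -/

import Mathlib

/-- The density of the Beta distribution `Be(k+1, l+1)` on `[0,1]`. -/
noncomputable def rho (k l : ℕ) (s : ℝ) : ℝ :=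
  ((k + l + 1).factorial : ℝ) / (k.factorial * l.factorial) * s ^ k * (1 - s) ^ l

/-!
Continuity of `f` on the compact interval gives, for each `ε > 0`, a constant `B` with
`|f s - f x| ≤ ε + B (s - x)²` on `[0,1]`. Integrating this against the probability density
`ρ_{k,l}` bounds `|∫ ρ_{k,l} f - f x|` by `ε + B ∫ ρ_{k,l}(s) (s - x)² ds`. The Beta moments
`∫ s ρ_{k,l} = (k+1)/(k+l+2)` and `∫ s² ρ_{k,l} = (k+1)(k+2)/((k+l+2)(k+l+3))` show that this
second moment is the variance, of order `1/(k+l)`, plus the squared distance from the mean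
`(k+1)/(k+l+2) ≈ k/(k+l)` to `x`; for `k = pₙ(x)`, `k + l = qₙ(x)` both are uniformly small.
-/

open Set intervalIntegral

theorem IsCompact.exists_dist_le_add_mul_dist_sq {α β : Type*} [PseudoMetricSpace α]
    [PseudoMetricSpace β] {K : Set α} {f : α → β} (hK : IsCompact K) (hf : ContinuousOn f K)
    {ε : ℝ} (hε : 0 < ε) :
    ∃ B, 0 ≤ B ∧ ∀ s ∈ K, ∀ x ∈ K, dist (f s) (f x) ≤ ε + B * dist s x ^ 2 := by
  obtain ⟨C, hC⟩ := Metric.isBounded_iff.1 (hK.image_of_continuousOn hf).isBounded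
  obtain ⟨δ, hδ, hfδ⟩ :=
    Metric.uniformContinuousOn_iff.1 (hK.uniformContinuousOn_of_continuous hf) ε hε
  refine ⟨max C 0 / δ ^ 2, by positivity, fun s hs x hx => ?_⟩
  rcases lt_or_ge (dist s x) δ with hsx | hsx
  · have := hfδ s hs x hx hsx
    have : 0 ≤ max C 0 / δ ^ 2 * dist s x ^ 2 := by positivity
    linarith
  · -- far from `x`, the oscillation bound `C` is absorbed by `B δ² ≤ B dist(s, x)²`
    have hCB : max C 0 ≤ max C 0 / δ ^ 2 * dist s x ^ 2 := by
      rw [div_mul_eq_mul_div, le_div_iff₀ (by positivity)]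
      gcongr
    have := hC (mem_image_of_mem f hs) (mem_image_of_mem f hx)
    linarith [le_max_left C 0]

theorem abs_integral_mul_sub_le {g f : ℝ → ℝ} (hg : Continuous g)
    (hg_nonneg : ∀ s ∈ Icc (0:ℝ) 1, 0 ≤ g s) (hg_one : ∫ s in (0:ℝ)..1, g s = 1)
    (hf : ContinuousOn f (Icc 0 1)) {x ε B : ℝ}
    (hfx : ∀ s ∈ Icc (0:ℝ) 1, |f s - f x| ≤ ε + B * (s - x) ^ 2) :
    |(∫ s in (0:ℝ)..1, g s * f s) - f x| ≤ ε + B * ∫ s in (0:ℝ)..1, g s * (s - x) ^ 2 := by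
  have hf' : ContinuousOn f (uIcc 0 1) := by rwa [uIcc_of_le zero_le_one]
  have hgf : IntervalIntegrable (fun s => g s * f s) MeasureTheory.volume 0 1 :=
    (hg.continuousOn.mul hf').intervalIntegrable
  have hgx : IntervalIntegrable (fun s => g s * (s - x) ^ 2) MeasureTheory.volume 0 1 :=
    (by fun_prop : Continuous fun s => g s * (s - x) ^ 2).intervalIntegrable _ _
  have hdiff : (∫ s in (0:ℝ)..1, g s * f s) - f x = ∫ s in (0:ℝ)..1, g s * (f s - f x) := by
    simp only [mul_sub]
    rw [integral_sub hgf (hg.intervalIntegrable _ _ |>.mul_const _), integral_mul_const, hg_one,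
      one_mul]
  calc |(∫ s in (0:ℝ)..1, g s * f s) - f x|
      ≤ ∫ s in (0:ℝ)..1, |g s * (f s - f x)| := hdiff ▸ abs_integral_le_integral_abs zero_le_one
    _ ≤ ∫ s in (0:ℝ)..1, (ε * g s + B * (g s * (s - x) ^ 2)) := by
      refine integral_mono_on zero_le_one ?_ ?_ fun s hs => ?_
      · exact (hg.continuousOn.mul (hf'.sub continuousOn_const)).abs.intervalIntegrable
      · exact ((hg.intervalIntegrable _ _).const_mul _).add (hgx.const_mul _)
      rw [abs_mul, abs_of_nonneg (hg_nonneg s hs)]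
      nlinarith [hfx s hs, hg_nonneg s hs]
    _ = ε + B * ∫ s in (0:ℝ)..1, g s * (s - x) ^ 2 := by
      rw [integral_add ((hg.intervalIntegrable _ _).const_mul _) (hgx.const_mul _),
        integral_const_mul, integral_const_mul, hg_one, mul_one]

theorem integral_pow_mul_one_sub_pow (k l : ℕ) :
    ∫ s in (0:ℝ)..1, s ^ k * (1 - s) ^ l = k.factorial * l.factorial / (k + l + 1).factorial := by
  induction l generalizing k with
  | zero =>
    simp only [pow_zero, mul_one, integral_pow, Nat.factorial_zero, Nat.add_zero,
      Nat.factorial_succ]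
    push_cast
    field_simp
    simp
  | succ l ih =>
    have hsplit : ∫ s in (0:ℝ)..1, s ^ k * (1 - s) ^ (l + 1)
        = (∫ s in (0:ℝ)..1, s ^ k * (1 - s) ^ l) - ∫ s in (0:ℝ)..1, s ^ (k + 1) * (1 - s) ^ l := by
      rw [← integral_sub (Continuous.intervalIntegrable (by fun_prop) _ _)
        (Continuous.intervalIntegrable (by fun_prop) _ _)]
      congr 1 with s
      ring
    rw [hsplit, ih, ih, show k + 1 + l + 1 = k + l + 1 + 1 by ring,
      show k + (l + 1) + 1 = k + l + 1 + 1 by ring]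
    simp only [Nat.factorial_succ (k + l + 1), Nat.factorial_succ l, Nat.factorial_succ k]
    push_cast
    field_simp
    ring

@[fun_prop]
theorem continuous_rho (k l : ℕ) : Continuous (rho k l) := by
  unfold rho; fun_prop

theorem rho_nonneg (k l : ℕ) {s : ℝ} (hs : s ∈ Icc (0:ℝ) 1) : 0 ≤ rho k l s := by
  obtain ⟨hs₀, hs₁⟩ := hs
  have : 0 ≤ 1 - s := sub_nonneg.2 hs₁
  unfold rho
  positivity

theorem integral_rho (k l : ℕ) : ∫ s in (0:ℝ)..1, rho k l s = 1 := by
  simp only [rho, mul_assoc, integral_const_mul, integral_pow_mul_one_sub_pow]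
  field_simp

theorem mul_rho (k l : ℕ) (s : ℝ) :
    s * rho k l s = (k + 1) / (k + l + 2) * rho (k + 1) l s := by
  simp only [rho, show k + 1 + l + 1 = k + l + 1 + 1 by ring, Nat.factorial_succ]
  push_cast
  field_simp
  ring

theorem integral_mul_rho (k l : ℕ) :
    ∫ s in (0:ℝ)..1, s * rho k l s = (k + 1) / (k + l + 2) := by
  simp only [mul_rho, integral_const_mul, integral_rho, mul_one]

theorem integral_sq_mul_rho (k l : ℕ) :
    ∫ s in (0:ℝ)..1, s ^ 2 * rho k l s = (k + 1) / (k + l + 2) * ((k + 2) / (k + l + 3)) := by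
  have h (s : ℝ) : s ^ 2 * rho k l s = (k + 1) / (k + l + 2) * (s * rho (k + 1) l s) := by
    rw [sq, mul_assoc, mul_rho]; ring
  simp only [h, integral_const_mul, integral_mul_rho]
  push_cast
  ring

theorem integral_rho_mul_sub_sq (k l : ℕ) (x : ℝ) :
    ∫ s in (0:ℝ)..1, rho k l s * (s - x) ^ 2
      = (k + 1) * (l + 1) / ((k + l + 2) ^ 2 * (k + l + 3)) + ((k + 1) / (k + l + 2) - x) ^ 2 := by
  have hint (i : ℕ) : IntervalIntegrable (fun s => s ^ i * rho k l s) MeasureTheory.volume 0 1 :=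
    (by fun_prop : Continuous fun s => s ^ i * rho k l s).intervalIntegrable _ _
  have hexpand (s : ℝ) : rho k l s * (s - x) ^ 2
      = s ^ 2 * rho k l s - 2 * x * (s ^ 1 * rho k l s) + x ^ 2 * (s ^ 0 * rho k l s) := by ring
  simp only [hexpand]
  rw [integral_add ((hint 2).sub ((hint 1).const_mul _)) ((hint 0).const_mul _),
    integral_sub (hint 2) ((hint 1).const_mul _), integral_const_mul, integral_const_mul]
  simp only [pow_one, pow_zero, one_mul, integral_sq_mul_rho, integral_mul_rho, integral_rho]
  field_simp
  ring

theorem integral_rho_mul_sub_sq_le (k l : ℕ) {x : ℝ} (hx : x ∈ Icc (0:ℝ) 1) :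
    ∫ s in (0:ℝ)..1, rho k l s * (s - x) ^ 2
      ≤ 1 / (k + l + 1) + |(k + 1) / (k + l + 2) - x| := by
  rw [integral_rho_mul_sub_sq]
  have hvar : (k + 1) * (l + 1) / ((k + l + 2) ^ 2 * (k + l + 3) : ℝ) ≤ 1 / (k + l + 1) := by
    rw [div_le_div_iff₀ (by positivity) (by positivity)]
    nlinarith [sq_nonneg ((k:ℝ) - l), (by positivity : (0:ℝ) ≤ k * l)]
  have hmean : |(k + 1) / (k + l + 2) - x| ≤ 1 := by
    have : (k + 1) / (k + l + 2) ≤ (1:ℝ) := by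
      rw [div_le_one (by positivity)]; linarith [(l.cast_nonneg : (0:ℝ) ≤ l)]
    have : (0:ℝ) ≤ (k + 1) / (k + l + 2) := by positivity
    rw [abs_le]
    constructor <;> linarith [hx.1, hx.2]
  nlinarith [abs_nonneg ((k + 1) / (k + l + 2) - x), sq_abs ((k + 1) / (k + l + 2) - x)]

theorem abs_succ_div_add_two_sub_div_le {k Q : ℕ} (hkQ : k ≤ Q) (hQ : 0 < Q) :
    |((k + 1) / (Q + 2) - k / Q : ℝ)| ≤ 1 / Q := by
  have hkQ' : (k : ℝ) ≤ Q := by exact_mod_cast hkQ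
  have hQ' : (0 : ℝ) < Q := by exact_mod_cast hQ
  rw [div_sub_div _ _ (by positivity) hQ'.ne', abs_div,
    abs_of_pos (by positivity : (0:ℝ) < (Q + 2) * Q), div_le_div_iff₀ (by positivity) hQ']
  have hnum : |((k + 1) * Q - (Q + 2) * k : ℝ)| ≤ Q := abs_le.2 ⟨by linarith, by linarith⟩
  nlinarith

theorem integral_rho_sub_mul_sub_sq_le {k Q : ℕ} (hkQ : k ≤ Q) (hQ : 0 < Q) {x : ℝ}
    (hx : x ∈ Icc (0:ℝ) 1) :
    ∫ s in (0:ℝ)..1, rho k (Q - k) s * (s - x) ^ 2 ≤ 2 / Q + |k / Q - x| := by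
  have hsum : (k : ℝ) + (Q - k : ℕ) = Q := by exact_mod_cast Nat.add_sub_cancel' hkQ
  have h := integral_rho_mul_sub_sq_le k (Q - k) hx
  rw [hsum] at h
  have h1 : 1 / (Q + 1 : ℝ) ≤ 1 / Q := by gcongr; linarith
  have h2 := abs_succ_div_add_two_sub_div_le hkQ hQ
  have h3 := abs_sub_le ((k + 1) / (Q + 2) : ℝ) (k / Q) x
  have h4 : 2 / (Q : ℝ) = 1 / Q + 1 / Q := by ring
  linarith

theorem stmt_8_general (f : ℝ → ℝ) (hf : ContinuousOn f (Set.Icc (0:ℝ) 1))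
    (p q : ℕ → ℝ → ℕ)
    (hpq : ∀ n, ∀ x ∈ Set.Icc (0:ℝ) 1, (p n x : ℝ) / (q n x : ℝ) ∈ Set.Icc (0:ℝ) 1)
    (hqinf : ∀ M : ℕ, ∃ N : ℕ, ∀ n ≥ N, ∀ x ∈ Set.Icc (0:ℝ) 1, M ≤ q n x)
    (hunif : ∀ ε > (0:ℝ), ∃ N : ℕ, ∀ n ≥ N, ∀ x ∈ Set.Icc (0:ℝ) 1,
        |(p n x : ℝ) / (q n x : ℝ) - x| < ε) :
    ∀ ε > (0:ℝ), ∃ N : ℕ, ∀ n ≥ N, ∀ x ∈ Set.Icc (0:ℝ) 1,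
      |(∫ s in (0:ℝ)..1, rho (p n x) (q n x - p n x) s * f s) - f x| < ε := by
  intro ε hε
  obtain ⟨B, hB, hfB⟩ := isCompact_Icc.exists_dist_le_add_mul_dist_sq hf (half_pos hε)
  set t := ε / (6 * (B + 1)) with ht
  obtain ⟨M, hM⟩ := exists_nat_gt t⁻¹
  have hM₀ : (0 : ℝ) < M := lt_trans (by positivity) hM
  obtain ⟨N₁, hN₁⟩ := hqinf M
  obtain ⟨N₂, hN₂⟩ := hunif t (by positivity)
  refine ⟨max N₁ N₂, fun n hn x hx => ?_⟩
  have hMq : (M : ℝ) ≤ q n x := by exact_mod_cast hN₁ n (le_of_max_le_left hn) x hx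
  have hq : 0 < q n x := by exact_mod_cast hM₀.trans_le hMq
  have hpq' : p n x ≤ q n x := by
    exact_mod_cast (div_le_one (by positivity)).1 (hpq n x hx).2
  have hmoment := integral_rho_sub_mul_sub_sq_le hpq' hq hx
  have hqt : 2 / (q n x : ℝ) < 2 * t := by
    rw [div_lt_iff₀ (by positivity)]
    nlinarith [(inv_lt_iff_one_lt_mul₀ (by positivity : 0 < t)).1 hM]
  have hBt : B * (3 * t) < ε / 2 := by
    rw [ht, show B * (3 * (ε / (6 * (B + 1)))) = ε / 2 * (B / (B + 1)) by field_simp; ring]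
    exact mul_lt_of_lt_one_right (half_pos hε) ((div_lt_one (by positivity)).2 (lt_add_one B))
  calc _ ≤ ε / 2 + B * ∫ s in (0:ℝ)..1, rho (p n x) (q n x - p n x) s * (s - x) ^ 2 :=
        abs_integral_mul_sub_le (continuous_rho _ _) (fun s hs => rho_nonneg _ _ hs)
          (integral_rho _ _) hf
          (fun s hs => by simpa only [Real.dist_eq, sq_abs] using hfB s hs x hx)
    _ ≤ ε / 2 + B * (3 * t) := by gcongr; linarith [hN₂ n (le_of_max_le_right hn) x hx]
    _ < ε := by linarith

theorem stmt_8 (f : ℝ → ℝ) (hf : ContinuousOn f (Set.Icc (0:ℝ) 1))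
    (p q : ℕ → ℝ → ℕ)
    (hq : ∀ n, ∀ x ∈ Set.Icc (0:ℝ) 1, 0 < q n x)
    (hpq : ∀ n, ∀ x ∈ Set.Icc (0:ℝ) 1, (p n x : ℝ) / (q n x : ℝ) ∈ Set.Icc (0:ℝ) 1)
    (hqinf : ∀ M : ℕ, ∃ N : ℕ, ∀ n ≥ N, ∀ x ∈ Set.Icc (0:ℝ) 1, M ≤ q n x)
    (hunif : ∀ ε > (0:ℝ), ∃ N : ℕ, ∀ n ≥ N, ∀ x ∈ Set.Icc (0:ℝ) 1,
        |(p n x : ℝ) / (q n x : ℝ) - x| < ε) :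
    ∀ ε > (0:ℝ), ∃ N : ℕ, ∀ n ≥ N, ∀ x ∈ Set.Icc (0:ℝ) 1,
      |(∫ s in (0:ℝ)..1, rho (p n x) (q n x - p n x) s * f s) - f x| < ε :=
  stmt_8_general f hf p q hpq hqinf hunif
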